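/- arXiv:2403.11359 — 3 statements merged into one kernel-verified Lean document; each statement's English description precedes it below -/
import Mathlib

section
/- Let π be a permutation of {1,…,n} avoiding the pattern 132 and having exactly three left-to-right minima, with values m1 > m2 > m3 occurring at positions p1 < p2 < p3. Then π avoids the pattern 4231 if and only if m1 = m2 + 1 or p3 = p2 + 1. -/
/-- A Dyck word of semilength `n`, as a list of booleans read left to right,
where `true` is an up-step `U` and `false` is a down-step `D`:
exactly `n` of each letter, and every prefix has at least as many `U`'s as `D`'s. -/
def IsDyckWord (n : ℕ) (w : List Bool) : Prop :=
  w.count true = n ∧ w.count false = n ∧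
    ∀ k : ℕ, (w.take k).count false ≤ (w.take k).count true

/-- The number of peaks of a word: positions where a `U` is immediately followed by a `D`. -/
def numPeaks (w : List Bool) : ℕ := (w.zip w.tail).count (true, false)

/-- The word `U^a D^b`. -/
def upDown (a b : ℕ) : List Bool :=
  List.replicate a true ++ List.replicate b false

/-- A permutation `π` of `{0, …, n-1}` contains the pattern `σ` (a permutation of
`{0, …, m-1}`) if some subsequence of values of `π` is in the same relative order as `σ`. -/
def ContainsPattern {n m : ℕ} (π : Equiv.Perm (Fin n)) (σ : Equiv.Perm (Fin m)) : Prop :=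
  ∃ f : Fin m → Fin n, StrictMono f ∧ ∀ a b : Fin m, π (f a) < π (f b) ↔ σ a < σ b

/-- A permutation avoids a pattern if it does not contain it. -/
def AvoidsPattern {n m : ℕ} (π : Equiv.Perm (Fin n)) (σ : Equiv.Perm (Fin m)) : Prop :=
  ¬ ContainsPattern π σ

/-- The pattern 132 (0-indexed: 021). -/
def pat132 : Equiv.Perm (Fin 3) where
  toFun := ![0, 2, 1]
  invFun := ![0, 2, 1]
  left_inv := by intro x; fin_cases x <;> rfl
  right_inv := by intro x; fin_cases x <;> rfl

/-- The pattern 321 (0-indexed: 210). -/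
def pat321 : Equiv.Perm (Fin 3) where
  toFun := ![2, 1, 0]
  invFun := ![2, 1, 0]
  left_inv := by intro x; fin_cases x <;> rfl
  right_inv := by intro x; fin_cases x <;> rfl

/-- The pattern 4321 (0-indexed: 3210). -/
def pat4321 : Equiv.Perm (Fin 4) where
  toFun := ![3, 2, 1, 0]
  invFun := ![3, 2, 1, 0]
  left_inv := by intro x; fin_cases x <;> rfl
  right_inv := by intro x; fin_cases x <;> rfl

/-- The pattern 4231 (0-indexed: 3120). -/
def pat4231 : Equiv.Perm (Fin 4) where
  toFun := ![3, 1, 2, 0]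
  invFun := ![3, 1, 2, 0]
  left_inv := by intro x; fin_cases x <;> rfl
  right_inv := by intro x; fin_cases x <;> rfl

/-- The strictly decreasing pattern `(k+1)k⋯21` of length `k+1`. -/
def patDesc (k : ℕ) : Equiv.Perm (Fin (k+1)) where
  toFun := Fin.rev
  invFun := Fin.rev
  left_inv := Fin.rev_rev
  right_inv := Fin.rev_rev

/-- `w` has exactly three peaks and, in its (unique) decomposition
`U^{a₁}D^{b₁}U^{a₂}D^{b₂}U^{a₃}D^{b₃}` with all exponents positive,
`a₂ = 1` or `b₂ = 1`. -/
def ThreePeakMiddleOne (w : List Bool) : Prop :=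
  numPeaks w = 3 ∧ ∃ a₁ b₁ a₂ b₂ a₃ b₃ : ℕ,
    0 < a₁ ∧ 0 < b₁ ∧ 0 < a₂ ∧ 0 < b₂ ∧ 0 < a₃ ∧ 0 < b₃ ∧
    w = upDown a₁ b₁ ++ upDown a₂ b₂ ++ upDown a₃ b₃ ∧ (a₂ = 1 ∨ b₂ = 1)

/-- `i` is (the position of) a left-to-right minimum of `π`. -/
def IsLtrMin {n : ℕ} (π : Equiv.Perm (Fin n)) (i : Fin n) : Prop :=
  ∀ j : Fin n, j < i → π i < π j

/-!
With exactly three left-to-right minima, `π` reads `m₁ α m₂ β m₃ γ`, where every entry of `α`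
exceeds `m₁`, every entry of `β` exceeds `m₂`, and `m₃` is the global minimum. In a 132-avoider
the entries after a position `a` that exceed `π a` increase. Applied at `m₃` and at `m₁`, this
forces the `2`, `3` of any `4231` into `β` with values in `[m₂, m₁)`, so that `β` has at least
two entries and `m₁ ≥ m₂ + 2`. Conversely, if both gaps are present, the entry `m₂ + 1` cannot
lie in `γ` (it would form 132 with `m₂` and the first entry of `β`), so it lies in `β`, and
`m₁ m₂ (m₂ + 1) m₃` is a `4231`.
-/

theorem containsPattern_pat132_iff {n : ℕ} {π : Equiv.Perm (Fin n)} :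
    ContainsPattern π pat132 ↔ ∃ a b c, a < b ∧ b < c ∧ π a < π c ∧ π c < π b := by
  constructor
  · rintro ⟨f, hf, hv⟩
    exact ⟨f 0, f 1, f 2, hf (by decide), hf (by decide), (hv 0 2).2 (by decide),
      (hv 2 1).2 (by decide)⟩
  · rintro ⟨a, b, c, hab, hbc, hac, hcb⟩
    refine ⟨![a, b, c], ?_, fun x y => ?_⟩
    · simp [Fin.strictMono_iff_lt_succ, Fin.forall_fin_succ, hab, hbc]
    · fin_cases x <;> fin_cases y <;> simp [pat132] <;> order

theorem containsPattern_pat4231_iff {n : ℕ} {π : Equiv.Perm (Fin n)} :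
    ContainsPattern π pat4231 ↔
      ∃ i j k l, i < j ∧ j < k ∧ k < l ∧ π l < π j ∧ π j < π k ∧ π k < π i := by
  constructor
  · rintro ⟨f, hf, hv⟩
    exact ⟨f 0, f 1, f 2, f 3, hf (by decide), hf (by decide), hf (by decide),
      (hv 3 1).2 (by decide), (hv 1 2).2 (by decide), (hv 2 0).2 (by decide)⟩
  · rintro ⟨i, j, k, l, hij, hjk, hkl, hlj, hjk', hki⟩
    refine ⟨![i, j, k, l], ?_, fun x y => ?_⟩
    · simp [Fin.strictMono_iff_lt_succ, Fin.forall_fin_succ, hij, hjk, hkl]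
    · fin_cases x <;> fin_cases y <;> simp [pat4231] <;> order

theorem AvoidsPattern.lt_of_pat132 {n : ℕ} {π : Equiv.Perm (Fin n)}
    (h : AvoidsPattern π pat132) {a b c : Fin n} (hab : a < b) (hbc : b < c)
    (hac : π a < π c) : π b < π c :=
  (lt_or_gt_of_ne (π.injective.ne hbc.ne)).resolve_right fun hcb =>
    h (containsPattern_pat132_iff.2 ⟨a, b, c, hab, hbc, hac, hcb⟩)

theorem exists_isLtrMin_le_apply_le {n : ℕ} (π : Equiv.Perm (Fin n)) (r : Fin n) :
    ∃ s ≤ r, IsLtrMin π s ∧ π s ≤ π r := by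
  obtain ⟨s, hs, hmin⟩ := (Finset.Iic r).exists_min_image π ⟨r, Finset.mem_Iic.2 le_rfl⟩
  rw [Finset.mem_Iic] at hs
  refine ⟨s, hs, fun j hj => ?_, hmin r (Finset.mem_Iic.2 le_rfl)⟩
  exact (hmin j (Finset.mem_Iic.2 (hj.le.trans hs))).lt_of_ne (π.injective.ne hj.ne')

namespace ThreeLtrMinima

variable {n : ℕ} {π : Equiv.Perm (Fin n)} {p₁ p₂ p₃ : Fin n}

theorem first_le (h12 : p₁ < p₂) (h23 : p₂ < p₃)
    (honly : ∀ i : Fin n, IsLtrMin π i → i = p₁ ∨ i = p₂ ∨ i = p₃) (r : Fin n) : p₁ ≤ r := by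
  obtain ⟨s, hsr, hs, -⟩ := exists_isLtrMin_le_apply_le π r
  rcases honly s hs with rfl | rfl | rfl <;> order

theorem first_le_apply_of_lt_second (h23 : p₂ < p₃)
    (honly : ∀ i : Fin n, IsLtrMin π i → i = p₁ ∨ i = p₂ ∨ i = p₃) {r : Fin n} (hr : r < p₂) :
    π p₁ ≤ π r := by
  obtain ⟨s, hsr, hs, hsv⟩ := exists_isLtrMin_le_apply_le π r
  rcases honly s hs with rfl | rfl | rfl
  · exact hsv
  all_goals order

theorem second_le_apply_of_lt_third (h12 : p₁ < p₂) (hm2 : IsLtrMin π p₂)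
    (honly : ∀ i : Fin n, IsLtrMin π i → i = p₁ ∨ i = p₂ ∨ i = p₃) {r : Fin n} (hr : r < p₃) :
    π p₂ ≤ π r := by
  obtain ⟨s, hsr, hs, hsv⟩ := exists_isLtrMin_le_apply_le π r
  have := hm2 p₁ h12
  rcases honly s hs with rfl | rfl | rfl <;> order

theorem third_le_apply (h12 : p₁ < p₂) (h23 : p₂ < p₃) (hm2 : IsLtrMin π p₂)
    (hm3 : IsLtrMin π p₃) (honly : ∀ i : Fin n, IsLtrMin π i → i = p₁ ∨ i = p₂ ∨ i = p₃)
    (r : Fin n) : π p₃ ≤ π r := by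
  obtain ⟨s, hsr, hs, hsv⟩ := exists_isLtrMin_le_apply_le π r
  have := hm2 p₁ h12
  have := hm3 p₂ h23
  rcases honly s hs with rfl | rfl | rfl <;> order

theorem containsPattern_pat4231_of_gaps (h132 : AvoidsPattern π pat132) (h12 : p₁ < p₂)
    (h23 : p₂ < p₃) (hm2 : IsLtrMin π p₂) (hm3 : IsLtrMin π p₃)
    (honly : ∀ i : Fin n, IsLtrMin π i → i = p₁ ∨ i = p₂ ∨ i = p₃)
    (hval : (π p₂ : ℕ) + 1 < π p₁) (hpos : (p₂ : ℕ) + 1 < p₃) :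
    ContainsPattern π pat4231 := by
  obtain ⟨q, hq⟩ : ∃ q, (π q : ℕ) = π p₂ + 1 :=
    ⟨π.symm ⟨_, hval.trans (π p₁).isLt⟩, by simp⟩
  have hp₂q : p₂ < q := by
    by_contra! hqp₂
    rcases hqp₂.lt_or_eq with hlt | rfl
    · have := first_le_apply_of_lt_second h23 honly hlt
      omega
    · omega
  have hqp₃ : q < p₃ := by
    by_contra! hp₃q
    let r : Fin n := ⟨p₂ + 1, by omega⟩
    have hp₂r : p₂ < r := Fin.lt_def.2 (Nat.lt_succ_self _)
    have hrp₃ : r < p₃ := Fin.lt_def.2 hpos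
    have hrq : π r < π q := h132.lt_of_pat132 hp₂r (hrp₃.trans_le hp₃q) (by omega)
    have hp₂r' := second_le_apply_of_lt_third h12 hm2 honly hrp₃
    exact hp₂r.ne' (π.injective (Fin.ext (by omega)))
  exact containsPattern_pat4231_iff.2
    ⟨p₁, p₂, q, p₃, h12, hp₂q, hqp₃, hm3 p₂ h23, by omega, by omega⟩

theorem gaps_of_containsPattern_pat4231 (h132 : AvoidsPattern π pat132) (h12 : p₁ < p₂)
    (h23 : p₂ < p₃) (hm2 : IsLtrMin π p₂) (hm3 : IsLtrMin π p₃)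
    (honly : ∀ i : Fin n, IsLtrMin π i → i = p₁ ∨ i = p₂ ∨ i = p₃)
    (h : ContainsPattern π pat4231) : (π p₂ : ℕ) + 1 < π p₁ ∧ (p₂ : ℕ) + 1 < p₃ := by
  obtain ⟨i, j, k, l, hij, hjk, hkl, hlj, hjk', hki⟩ := containsPattern_pat4231_iff.1 h
  have hkp₃ : k < p₃ := by
    by_contra! hp₃k
    have hl := third_le_apply h12 h23 hm2 hm3 honly l
    have hp₃k' : p₃ < k := hp₃k.lt_of_ne (by rintro rfl; order)
    have hl' : π p₃ < π l := hl.lt_of_ne (π.injective.ne (hp₃k'.trans hkl).ne)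
    exact (h132.lt_of_pat132 hp₃k' hkl hl').not_gt (hlj.trans hjk')
  have hkp₁ : π k < π p₁ := by
    by_contra! hp₁k
    rcases (first_le h12 h23 honly i).lt_or_eq with hp₁i | rfl
    · have hp₁k' : π p₁ < π k :=
        hp₁k.lt_of_ne (π.injective.ne (hp₁i.trans (hij.trans hjk)).ne)
      exact (h132.lt_of_pat132 hp₁i (hij.trans hjk) hp₁k').not_gt hki
    · order
  have hp₂j : p₂ ≤ j := by
    by_contra! hjp₂
    have := first_le_apply_of_lt_second h23 honly hjp₂
    order
  have hj := second_le_apply_of_lt_third h12 hm2 honly (hjk.trans hkp₃)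
  omega

theorem containsPattern_pat4231_iff_gaps (h132 : AvoidsPattern π pat132) (h12 : p₁ < p₂)
    (h23 : p₂ < p₃) (hm2 : IsLtrMin π p₂) (hm3 : IsLtrMin π p₃)
    (honly : ∀ i : Fin n, IsLtrMin π i → i = p₁ ∨ i = p₂ ∨ i = p₃) :
    ContainsPattern π pat4231 ↔ (π p₂ : ℕ) + 1 < π p₁ ∧ (p₂ : ℕ) + 1 < p₃ :=
  ⟨gaps_of_containsPattern_pat4231 h132 h12 h23 hm2 hm3 honly,
    fun h => containsPattern_pat4231_of_gaps h132 h12 h23 hm2 hm3 honly h.1 h.2⟩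

end ThreeLtrMinima

theorem avoid_4231_iff_of_three_ltr_minima_general (n : ℕ) (π : Equiv.Perm (Fin n))
    (h132 : AvoidsPattern π pat132) (p₁ p₂ p₃ : Fin n) (h12 : p₁ < p₂) (h23 : p₂ < p₃)
    (hm2 : IsLtrMin π p₂) (hm3 : IsLtrMin π p₃)
    (honly : ∀ i : Fin n, IsLtrMin π i → i = p₁ ∨ i = p₂ ∨ i = p₃) :
    AvoidsPattern π pat4231 ↔
      ((π p₁ : ℕ) = (π p₂ : ℕ) + 1 ∨ (p₃ : ℕ) = (p₂ : ℕ) + 1) := by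
  have hval : π p₂ < π p₁ := hm2 p₁ h12
  rw [AvoidsPattern, ThreeLtrMinima.containsPattern_pat4231_iff_gaps h132 h12 h23 hm2 hm3 honly]
  omega

/-- Let `π` avoid 132 and have exactly three left-to-right minima, at positions
`p₁ < p₂ < p₃` (with values `π p₁ > π p₂ > π p₃`). Then `π` avoids 4231 if and only if
`π p₁ = π p₂ + 1` or `p₃ = p₂ + 1`. -/
theorem avoid_4231_iff_of_three_ltr_minima (n : ℕ) (π : Equiv.Perm (Fin n))
    (h132 : AvoidsPattern π pat132) (p₁ p₂ p₃ : Fin n) (h12 : p₁ < p₂) (h23 : p₂ < p₃)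
    (hm1 : IsLtrMin π p₁) (hm2 : IsLtrMin π p₂) (hm3 : IsLtrMin π p₃)
    (honly : ∀ i : Fin n, IsLtrMin π i → i = p₁ ∨ i = p₂ ∨ i = p₃) :
    AvoidsPattern π pat4231 ↔
      ((π p₁ : ℕ) = (π p₂ : ℕ) + 1 ∨ (p₃ : ℕ) = (p₂ : ℕ) + 1) :=
  avoid_4231_iff_of_three_ltr_minima_general n π h132 p₁ p₂ p₃ h12 h23 hm2 hm3 honly
end

section
/- For every n ≥ 1, the number of sextuples (a1, b1, a2, b2, a3, b3) of positive integers satisfying a1 + a2 + a3 = n, b1 + b2 + b3 = n, b1 ≤ a1, b1 + b2 ≤ a1 + a2, and (a2 = 1 or b2 = 1) equals the sum of k² for k from 1 to n−2 (this count is 0 when n ≤ 2). -/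
/-- The condition on a sextuple `(a₁, b₁, a₂, b₂, a₃, b₃)` of positive integers:
`a₁ + a₂ + a₃ = n`, `b₁ + b₂ + b₃ = n`, `b₁ ≤ a₁`, `b₁ + b₂ ≤ a₁ + a₂`, and
(`a₂ = 1` or `b₂ = 1`). -/
def GoodSextuple (n a₁ b₁ a₂ b₂ a₃ b₃ : ℕ) : Prop :=
  0 < a₁ ∧ 0 < b₁ ∧ 0 < a₂ ∧ 0 < b₂ ∧ 0 < a₃ ∧ 0 < b₃ ∧
    a₁ + a₂ + a₃ = n ∧ b₁ + b₂ + b₃ = n ∧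
    b₁ ≤ a₁ ∧ b₁ + b₂ ≤ a₁ + a₂ ∧ (a₂ = 1 ∨ b₂ = 1)

/-!
If `a₂ = 1`, the pair `(b₁, b₁ + b₂ - 1)` is weakly increasing in `[1, a₁]`. If `b₂ = 1` and
`a₂ ≥ 2`, the pair `(a₁ + a₂ - b₁, a₁ - b₁ + 1)`, the height of the second peak and one more than
the height of the first valley, is strictly decreasing in `[1, b₃]`. In either case the pair
together with `k = a₁`, resp. `k = b₃`, determines the sextuple, and `k` ranges over `[1, n - 2]`.
The weakly increasing and the strictly decreasing pairs in `[1, k]` together fill the `k × k`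
square.
-/

def squareLayers (s : Finset ℕ) : Finset (Σ _ : ℕ, ℕ × ℕ) :=
  s.sigma fun k => Finset.Icc 1 k ×ˢ Finset.Icc 1 k

theorem card_squareLayers (s : Finset ℕ) : (squareLayers s).card = ∑ k ∈ s, k ^ 2 := by
  simp [squareLayers, Finset.card_sigma, sq]

theorem mem_squareLayers_Icc {m k x y : ℕ} :
    (⟨k, x, y⟩ : Σ _ : ℕ, ℕ × ℕ) ∈ squareLayers (Finset.Icc 1 m) ↔
      1 ≤ k ∧ k ≤ m ∧ 1 ≤ x ∧ x ≤ k ∧ 1 ≤ y ∧ y ≤ k := by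
  simp [squareLayers, and_assoc]

def sextupleToTriple : ℕ × ℕ × ℕ × ℕ × ℕ × ℕ → Σ _ : ℕ, ℕ × ℕ
  | (a₁, b₁, a₂, b₂, _, b₃) =>
    if a₂ = 1 then ⟨a₁, b₁, b₁ + b₂ - 1⟩ else ⟨b₃, a₁ + a₂ - b₁, a₁ - b₁ + 1⟩

def tripleToSextuple (n : ℕ) : (Σ _ : ℕ, ℕ × ℕ) → ℕ × ℕ × ℕ × ℕ × ℕ × ℕ
  | ⟨k, x, y⟩ =>
    if x ≤ y then (k, x, 1, y - x + 1, n - 1 - k, n - 1 - y)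
    else (n - 2 - k + y, n - 1 - k, x - y + 1, 1, k + 1 - x, k)

section

variable {n a₁ b₁ a₂ b₂ a₃ b₃ : ℕ}

theorem sextupleToTriple_mem (h : GoodSextuple n a₁ b₁ a₂ b₂ a₃ b₃) :
    sextupleToTriple (a₁, b₁, a₂, b₂, a₃, b₃) ∈ squareLayers (Finset.Icc 1 (n - 2)) := by
  unfold GoodSextuple at h
  simp only [sextupleToTriple]
  split_ifs <;> rw [mem_squareLayers_Icc] <;> omega

theorem tripleToSextuple_sextupleToTriple (h : GoodSextuple n a₁ b₁ a₂ b₂ a₃ b₃) :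
    tripleToSextuple n (sextupleToTriple (a₁, b₁, a₂, b₂, a₃, b₃)) =
      (a₁, b₁, a₂, b₂, a₃, b₃) := by
  unfold GoodSextuple at h
  simp only [sextupleToTriple]
  split_ifs <;> simp only [tripleToSextuple] <;> split_ifs <;>
    simp only [Prod.mk.injEq, true_and, and_true] <;> omega

end

section

variable {n : ℕ} {t : Σ _ : ℕ, ℕ × ℕ}

theorem tripleToSextuple_good (h : t ∈ squareLayers (Finset.Icc 1 (n - 2))) :
    GoodSextuple n (tripleToSextuple n t).1 (tripleToSextuple n t).2.1
      (tripleToSextuple n t).2.2.1 (tripleToSextuple n t).2.2.2.1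
      (tripleToSextuple n t).2.2.2.2.1 (tripleToSextuple n t).2.2.2.2.2 := by
  obtain ⟨k, x, y⟩ := t
  rw [mem_squareLayers_Icc] at h
  simp only [tripleToSextuple, GoodSextuple]
  split_ifs <;> dsimp only <;> omega

theorem sextupleToTriple_tripleToSextuple (h : t ∈ squareLayers (Finset.Icc 1 (n - 2))) :
    sextupleToTriple (tripleToSextuple n t) = t := by
  obtain ⟨k, x, y⟩ := t
  rw [mem_squareLayers_Icc] at h
  simp only [tripleToSextuple]
  split_ifs <;> simp only [sextupleToTriple] <;> split_ifs <;>
    simp only [Sigma.mk.injEq, heq_eq_eq, Prod.mk.injEq, true_and] <;> omega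

end

def goodSextupleEquiv (n : ℕ) :
    {x : ℕ × ℕ × ℕ × ℕ × ℕ × ℕ //
        GoodSextuple n x.1 x.2.1 x.2.2.1 x.2.2.2.1 x.2.2.2.2.1 x.2.2.2.2.2} ≃
      squareLayers (Finset.Icc 1 (n - 2)) where
  toFun x := ⟨sextupleToTriple x.1, sextupleToTriple_mem x.2⟩
  invFun t := ⟨tripleToSextuple n t.1, tripleToSextuple_good t.2⟩
  left_inv x := Subtype.ext (tripleToSextuple_sextupleToTriple x.2)
  right_inv t := Subtype.ext (sextupleToTriple_tripleToSextuple t.2)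

theorem three_peak_sextuple_count_general (n : ℕ) :
    Nat.card {x : ℕ × ℕ × ℕ × ℕ × ℕ × ℕ //
        GoodSextuple n x.1 x.2.1 x.2.2.1 x.2.2.2.1 x.2.2.2.2.1 x.2.2.2.2.2} =
      ∑ k ∈ Finset.Icc 1 (n - 2), k ^ 2 := by
  rw [Nat.card_congr (goodSextupleEquiv n), Nat.card_eq_finsetCard, card_squareLayers]

/-- For every `n ≥ 1`, the number of sextuples `(a₁, b₁, a₂, b₂, a₃, b₃)` of
positive integers with `a₁ + a₂ + a₃ = n`, `b₁ + b₂ + b₃ = n`, `b₁ ≤ a₁`,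
`b₁ + b₂ ≤ a₁ + a₂` and (`a₂ = 1` or `b₂ = 1`) equals `∑_{k=1}^{n-2} k²`. -/
theorem three_peak_sextuple_count (n : ℕ) (hn : 1 ≤ n) :
    Nat.card {x : ℕ × ℕ × ℕ × ℕ × ℕ × ℕ //
        GoodSextuple n x.1 x.2.1 x.2.2.1 x.2.2.2.1 x.2.2.2.2.1 x.2.2.2.2.2} =
      ∑ k ∈ Finset.Icc 1 (n - 2), k ^ 2 :=
  three_peak_sextuple_count_general n
end

section
/- For every n ≥ 1, the number of Dyck words of semilength n that either have at most two peaks, or have exactly three peaks and in the unique decomposition U^{a1}D^{b1}U^{a2}D^{b2}U^{a3}D^{b3} (with all exponents positive) satisfy a2 = 1 or b2 = 1, equals (n³ − 3n² + 5n)/3; equivalently, three times this number of Dyck words equals n³ − 3n² + 5n. -/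
open Finset

open Finset in
lemma aux_numPeaks_false_cons (t : List Bool) : numPeaks (false :: t) = numPeaks t := by
  cases t with
  | nil => rfl
  | cons y t => simp [numPeaks, List.count_cons]

lemma aux_numPeaks_true_true (t : List Bool) :
    numPeaks (true :: true :: t) = numPeaks (true :: t) := by
  simp [numPeaks, List.count_cons]

lemma aux_numPeaks_true_false (t : List Bool) :
    numPeaks (true :: false :: t) = numPeaks t + 1 := by
  rw [show numPeaks (true :: false :: t) = numPeaks (false :: t) + 1 by
    simp [numPeaks, List.count_cons]]
  rw [aux_numPeaks_false_cons]

lemma aux_numPeaks_repl_false (b : ℕ) (l : List Bool) :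
    numPeaks (List.replicate b false ++ l) = numPeaks l := by
  induction b with
  | zero => simp
  | succ b ih => rw [List.replicate_succ, List.cons_append, aux_numPeaks_false_cons, ih]

lemma aux_numPeaks_repl_true (a b : ℕ) (l : List Bool) (ha : 0 < a) (hb : 0 < b) :
    numPeaks (List.replicate a true ++ List.replicate b false ++ l) = numPeaks l + 1 := by
  induction a with
  | zero => omega
  | succ a ih =>
    rcases Nat.eq_zero_or_pos a with h | h
    · subst h
      obtain ⟨b', rfl⟩ : ∃ b', b = b' + 1 := ⟨b - 1, by omega⟩
      show numPeaks (true :: (List.replicate (b'+1) false ++ l)) = _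
      rw [List.replicate_succ]
      simp only [List.cons_append]
      rw [aux_numPeaks_true_false, aux_numPeaks_repl_false]
    · rw [List.replicate_succ, List.cons_append, List.cons_append]
      have : List.replicate a true ++ List.replicate b false ++ l
          = true :: (List.replicate (a-1) true ++ List.replicate b false ++ l) := by
        obtain ⟨a', rfl⟩ : ∃ a', a = a' + 1 := ⟨a - 1, by omega⟩
        simp [List.replicate_succ]
      rw [this, aux_numPeaks_true_true, ← this, ih h]

lemma numPeaks_upDown_append (a b : ℕ) (l : List Bool) (ha : 0 < a) (hb : 0 < b) :
    numPeaks (upDown a b ++ l) = numPeaks l + 1 := by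
  rw [upDown, List.append_assoc, ← List.append_assoc]
  exact aux_numPeaks_repl_true a b l ha hb

lemma numPeaks_upDown (a b : ℕ) (ha : 0 < a) (hb : 0 < b) : numPeaks (upDown a b) = 1 := by
  have := numPeaks_upDown_append a b [] ha hb
  simpa [numPeaks] using this

lemma count_upDown_true (a b : ℕ) : (upDown a b).count true = a := by
  simp [upDown, List.count_replicate]
lemma count_upDown_false (a b : ℕ) : (upDown a b).count false = b := by
  simp [upDown, List.count_replicate]
lemma length_upDown (a b : ℕ) : (upDown a b).length = a + b := by
  simp [upDown]

lemma take_upDown (a b k : ℕ) :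
    (upDown a b).take k = upDown (min k a) (min (k - a) b) := by
  rw [upDown, List.take_append, List.take_replicate, List.take_replicate,
    List.length_replicate, upDown]

lemma count_take_step (a b k : ℕ) (l : List Bool) (x : Bool) :
    ((upDown a b ++ l).take k).count x
      = ((upDown a b).take k).count x + (l.take (k - (a + b))).count x := by
  rw [List.take_append, List.count_append, length_upDown]

lemma count_take_three_true (a1 b1 a2 b2 a3 b3 k : ℕ) :
    ((upDown a1 b1 ++ (upDown a2 b2 ++ upDown a3 b3)).take k).count true
      = min k a1 + (min (k - (a1 + b1)) a2 + min (k - (a1 + b1) - (a2 + b2)) a3) := by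
  rw [count_take_step, count_take_step, take_upDown, take_upDown, take_upDown,
    count_upDown_true, count_upDown_true, count_upDown_true]

lemma count_take_three_false (a1 b1 a2 b2 a3 b3 k : ℕ) :
    ((upDown a1 b1 ++ (upDown a2 b2 ++ upDown a3 b3)).take k).count false
      = min (k - a1) b1 + (min (k - (a1 + b1) - a2) b2 + min (k - (a1 + b1) - (a2 + b2) - a3) b3) := by
  rw [count_take_step, count_take_step, take_upDown, take_upDown, take_upDown,
    count_upDown_false, count_upDown_false, count_upDown_false]

lemma peel_true : ∀ w : List Bool, w.head? = some true →
    ∃ a w', 0 < a ∧ w = List.replicate a true ++ w' ∧ w'.head? ≠ some true := by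
  intro w
  induction w with
  | nil => intro h; simp at h
  | cons x s ih =>
    intro h
    have hx : x = true := by simpa using h
    subst hx
    cases hs : s.head? with
    | none => exact ⟨1, s, one_pos, by simp, by simp [hs]⟩
    | some y =>
      cases y with
      | false => exact ⟨1, s, one_pos, by simp, by simp [hs]⟩
      | true =>
        obtain ⟨a, w', ha, heq, hh⟩ := ih hs
        exact ⟨a + 1, w', by omega, by rw [List.replicate_succ, List.cons_append, ← heq], hh⟩

lemma peel_false : ∀ w : List Bool, w.head? ≠ some true →
    ∃ b w', w = List.replicate b false ++ w' ∧ w'.head? ≠ some false ∧ (w ≠ [] → 0 < b) := by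
  intro w
  induction w with
  | nil => intro _; exact ⟨0, [], by simp, by simp, by simp⟩
  | cons x s ih =>
    intro h
    cases x with
    | true => simp at h
    | false =>
      cases hs : s.head? with
      | none => exact ⟨1, s, by simp, by simp [hs], fun _ => one_pos⟩
      | some y =>
        cases y with
        | true => exact ⟨1, s, by simp, by simp [hs], fun _ => one_pos⟩
        | false =>
          obtain ⟨b, w', heq, hh, hb⟩ := ih (by simp [hs])
          have hsne : s ≠ [] := by intro hnil; rw [hnil] at hs; simp at hs
          exact ⟨b + 1, w', by rw [List.replicate_succ, List.cons_append, ← heq],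
            hh, fun _ => by have := hb hsne; omega⟩

lemma no_trailing_true (n : ℕ) (v : List Bool) (c : ℕ) (hc : 0 < c)
    (hw : IsDyckWord n (v ++ List.replicate c true)) : False := by
  obtain ⟨h1, h2, h3⟩ := hw
  have hk := h3 v.length
  rw [List.take_left] at hk
  simp [List.count_append, List.count_replicate] at h1 h2
  omega

lemma rest_nil (n : ℕ) (v r : List Bool) (hw : IsDyckWord n (v ++ r))
    (hh : r.head? ≠ some false) (hp : numPeaks r = 0) : r = [] := by
  by_contra hne
  have hht : r.head? = some true := by
    cases r with
    | nil => exact absurd rfl hne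
    | cons x t =>
      cases x with
      | false => simp at hh
      | true => rfl
  obtain ⟨a, r3, ha, rfl, hh3⟩ := peel_true r hht
  cases hr3 : r3 with
  | nil =>
    subst hr3
    rw [List.append_nil] at hw
    exact no_trailing_true n v a ha hw
  | cons y t =>
    have hy : y = false := by
      subst hr3
      cases y with
      | false => rfl
      | true => simp at hh3
    subst hy; subst hr3
    have : numPeaks (List.replicate a true ++ false :: t)
        = numPeaks (upDown a 1 ++ t) := by
      simp [upDown]
    rw [this, numPeaks_upDown_append a 1 t ha one_pos] at hp
    omega

lemma dyck_head (n : ℕ) (w : List Bool) (hn : 1 ≤ n) (hw : IsDyckWord n w) :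
    w.head? = some true := by
  obtain ⟨h1, h2, h3⟩ := hw
  cases w with
  | nil => simp at h1; omega
  | cons x t =>
    cases x
    · have := h3 1
      simp [List.take_succ_cons, List.count_cons] at this
    · rfl

lemma dyck_decomp (n : ℕ) (w : List Bool) (hn : 1 ≤ n) (hw : IsDyckWord n w) :
    ∃ a1 b1 w', 0 < a1 ∧ 0 < b1 ∧ w = upDown a1 b1 ++ w' ∧ w'.head? ≠ some false ∧
      numPeaks w = numPeaks w' + 1 := by
  obtain ⟨a1, r1, ha1, heq1, hh1⟩ := peel_true w (dyck_head n w hn hw)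
  have hr1ne : r1 ≠ [] := by
    intro h
    subst h
    rw [List.append_nil] at heq1
    obtain ⟨h1, h2, h3⟩ := hw
    rw [heq1, List.count_replicate] at h2
    simp at h2; omega
  obtain ⟨b1, r2, heq2, hh2, hb1⟩ := peel_false r1 hh1
  refine ⟨a1, b1, r2, ha1, hb1 hr1ne, ?_, hh2, ?_⟩
  · rw [heq1, heq2, upDown, List.append_assoc]
  · rw [heq1, heq2, ← List.append_assoc]
    show numPeaks (upDown a1 b1 ++ r2) = _
    rw [numPeaks_upDown_append a1 b1 r2 ha1 (hb1 hr1ne)]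

lemma dyck_peaks1 (n : ℕ) (w : List Bool) (hn : 1 ≤ n) (hw : IsDyckWord n w)
    (hp : numPeaks w = 1) : w = upDown n n := by
  obtain ⟨a1, b1, r, ha, hb, rfl, hh, hnum⟩ := dyck_decomp n w hn hw
  rw [numPeaks_upDown_append a1 b1 r ha hb] at hp
  have hr : r = [] := rest_nil n (upDown a1 b1) r hw hh (by omega)
  subst hr
  rw [List.append_nil] at hw ⊢
  obtain ⟨h1, h2, -⟩ := hw
  rw [count_upDown_true] at h1
  rw [count_upDown_false] at h2
  subst h1; subst h2; rfl

lemma dyck_peaks2 (n : ℕ) (w : List Bool) (hn : 1 ≤ n) (hw : IsDyckWord n w)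
    (hp : numPeaks w = 2) :
    ∃ a1 b1 a2 b2, 0 < a1 ∧ 0 < b1 ∧ 0 < a2 ∧ 0 < b2 ∧ a1 + a2 = n ∧ b1 + b2 = n ∧
      w = upDown a1 b1 ++ (upDown a2 b2 ++ upDown 0 0) := by
  obtain ⟨a1, b1, r, ha, hb, rfl, hh, hnum⟩ := dyck_decomp n w hn hw
  rw [numPeaks_upDown_append a1 b1 r ha hb] at hp
  have hrne : r ≠ [] := by
    intro h; subst h
    have h0 : numPeaks ([] : List Bool) = 0 := rfl
    omega
  have hht : r.head? = some true := by
    cases r with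
    | nil => exact absurd rfl hrne
    | cons x t =>
      cases x with
      | false => simp at hh
      | true => rfl
  obtain ⟨a2, r3, ha2, rfl, hh3⟩ := peel_true r hht
  have hr3ne : r3 ≠ [] := by
    intro h; subst h
    rw [List.append_nil] at hw
    exact no_trailing_true n (upDown a1 b1) a2 ha2 hw
  obtain ⟨b2, r4, rfl, hh4, hb2⟩ := peel_false r3 hh3
  have hb2' := hb2 hr3ne
  have hsplit : upDown a1 b1 ++ (List.replicate a2 true ++ (List.replicate b2 false ++ r4))
      = (upDown a1 b1 ++ upDown a2 b2) ++ r4 := by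
    rw [upDown, upDown]; simp [List.append_assoc]
  have hsplit2 : List.replicate a2 true ++ (List.replicate b2 false ++ r4)
      = upDown a2 b2 ++ r4 := by
    rw [upDown]; simp [List.append_assoc]
  rw [hsplit] at hw
  rw [hsplit2, numPeaks_upDown_append a2 b2 _ ha2 hb2'] at hp
  have hr4 : r4 = [] := by
    refine rest_nil n _ r4 hw hh4 ?_
    omega
  subst hr4
  rw [List.append_nil] at hw ⊢
  obtain ⟨h1, h2, -⟩ := hw
  rw [List.count_append, count_upDown_true, count_upDown_true] at h1
  rw [List.count_append, count_upDown_false, count_upDown_false] at h2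
  exact ⟨a1, b1, a2, b2, ha, hb, ha2, hb2', h1, h2, by simp [List.append_assoc, upDown]⟩

lemma repl_append_inj (x : Bool) : ∀ a a' (t t' : List Bool), t.head? ≠ some x →
    t'.head? ≠ some x → List.replicate a x ++ t = List.replicate a' x ++ t' →
    a = a' ∧ t = t' := by
  intro a
  induction a with
  | zero =>
    intro a' t t' ht ht' h
    cases a' with
    | zero => simpa using h
    | succ a' =>
      rw [List.replicate_succ] at h
      simp at h
      rw [h] at ht; simp at ht
  | succ a ih =>
    intro a' t t' ht ht' h
    cases a' with
    | zero =>
      rw [List.replicate_succ] at h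
      simp at h
      rw [← h] at ht'; simp at ht'
    | succ a' =>
      rw [List.replicate_succ, List.replicate_succ] at h
      simp only [List.cons_append, List.cons.injEq] at h
      obtain ⟨ha, ht2⟩ := ih a' t t' ht ht' h.2
      exact ⟨by omega, ht2⟩

lemma cancel_block (a b a' b' : ℕ) (l l' : List Bool) (ha : 0 < a) (hb : 0 < b)
    (ha' : 0 < a') (hb' : 0 < b') (hl : l.head? ≠ some false) (hl' : l'.head? ≠ some false)
    (h : upDown a b ++ l = upDown a' b' ++ l') : a = a' ∧ b = b' ∧ l = l' := by
  rw [upDown, upDown, List.append_assoc, List.append_assoc] at h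
  have hh1 : (List.replicate b false ++ l).head? ≠ some true := by
    obtain ⟨b0, rfl⟩ : ∃ b0, b = b0 + 1 := ⟨b - 1, by omega⟩
    rw [List.replicate_succ]; simp
  have hh2 : (List.replicate b' false ++ l').head? ≠ some true := by
    obtain ⟨b0, rfl⟩ : ∃ b0, b' = b0 + 1 := ⟨b' - 1, by omega⟩
    rw [List.replicate_succ]; simp
  obtain ⟨hae, hte⟩ := repl_append_inj true a a' _ _ hh1 hh2 h
  obtain ⟨hbe, hle⟩ := repl_append_inj false b b' _ _ hl hl' hte
  exact ⟨hae, hbe, hle⟩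

lemma head?_upDown (a b : ℕ) (ha : 0 < a) : (upDown a b).head? = some true := by
  obtain ⟨a0, rfl⟩ : ∃ a0, a = a0 + 1 := ⟨a - 1, by omega⟩
  rw [upDown, List.replicate_succ]; simp

def sTs (a : ℕ) : ℕ := ∑ j ∈ range a, (j + 1)
def sS2 (m : ℕ) : ℕ := ∑ a ∈ range m, sTs a
def sS3 (N : ℕ) : ℕ := ∑ a ∈ range N, a * (N - a)
def sId (m : ℕ) : ℕ := ∑ a ∈ range m, a

lemma sTs_closed (a : ℕ) : 2 * sTs a = a * (a + 1) := by
  induction a with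
  | zero => rfl
  | succ a ih =>
    rw [sTs, Finset.sum_range_succ, ← sTs, Nat.mul_add, ih]
    ring

lemma sId_closed (m : ℕ) : 2 * sId m + 2 * m = m * (m + 1) := by
  induction m with
  | zero => rfl
  | succ m ih =>
    rw [sId, Finset.sum_range_succ, ← sId]
    nlinarith [ih]

lemma sS2_closed (k : ℕ) : 6 * sS2 (k + 1) = k * (k + 1) * (k + 2) := by
  induction k with
  | zero => rfl
  | succ k ih =>
    rw [sS2, Finset.sum_range_succ, ← sS2]
    have := sTs_closed (k + 1)
    nlinarith [ih]

lemma sS3_succ (N : ℕ) : sS3 (N + 1) = sS3 N + sId (N + 1) := by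
  rw [sS3, sS3, sId]
  rw [show ∑ a ∈ range (N+1), a * (N + 1 - a) = ∑ a ∈ range (N+1), (a * (N - a) + a) by
    apply Finset.sum_congr rfl
    intro a ha
    rw [Finset.mem_range] at ha
    have : N + 1 - a = (N - a) + 1 := by omega
    rw [this, Nat.mul_add, Nat.mul_one]]
  rw [Finset.sum_add_distrib, Finset.sum_range_succ (fun a => a * (N - a))]
  simp

lemma sS3_closed (k : ℕ) : 6 * sS3 (k + 1) = k * (k + 1) * (k + 2) := by
  induction k with
  | zero => rfl
  | succ k ih =>
    rw [sS3_succ]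
    have := sId_closed (k + 2)
    nlinarith [ih]

-- interval count
lemma countl (m l u : ℕ) :
    (∑ x ∈ range m, if l ≤ x ∧ x ≤ u then 1 else 0) = min (u + 1) m - min l m := by
  induction m with
  | zero => simp
  | succ m ih =>
    rw [Finset.sum_range_succ, ih]
    split_ifs with h <;> omega

-- weighted count
lemma countw (m u : ℕ) (h : u < m) :
    (∑ x ∈ range m, if 1 ≤ x ∧ x ≤ u then u + 1 - x else 0) = sTs u := by
  have h1 : (∑ x ∈ range m, if 1 ≤ x ∧ x ≤ u then u + 1 - x else 0)
      = ∑ x ∈ range (u + 1), (if 1 ≤ x ∧ x ≤ u then u + 1 - x else 0) := by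
    symm
    apply Finset.sum_subset (Finset.range_subset_range.mpr (by omega))
    intro x hx hnx
    rw [Finset.mem_range] at hx
    rw [Finset.mem_range] at hnx
    rw [if_neg (by omega)]
  rw [h1, ← Finset.sum_range_reflect, Finset.sum_range_succ, if_neg (by omega), add_zero, sTs]
  apply Finset.sum_congr rfl
  intro j hj
  rw [Finset.mem_range] at hj
  rw [if_pos (by omega)]
  omega

def G2 (n : ℕ) : Finset (ℕ × ℕ) :=
  (range (n+1) ×ˢ range (n+1)).filter (fun p => 1 ≤ p.2 ∧ p.2 ≤ p.1 ∧ p.1 + 1 ≤ n)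

def G3a (n : ℕ) : Finset (ℕ × ℕ × ℕ) :=
  (range (n+1) ×ˢ range (n+1) ×ˢ range (n+1)).filter
    (fun t => 1 ≤ t.2.1 ∧ t.2.1 ≤ t.1 ∧ t.1 + 2 ≤ n ∧ 1 ≤ t.2.2 ∧ t.2.1 + t.2.2 ≤ t.1 + 1)

def G3b (n : ℕ) : Finset (ℕ × ℕ × ℕ) :=
  (range (n+1) ×ˢ range (n+1) ×ˢ range (n+1)).filter
    (fun t => 1 ≤ t.2.1 ∧ t.2.1 ≤ t.1 ∧ 2 ≤ t.2.2 ∧ t.1 + t.2.2 + 1 ≤ n)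

lemma card_G2 (n : ℕ) : (G2 n).card = sId n := by
  rw [G2, Finset.card_filter, Finset.sum_product]
  have step : ∀ a1 ∈ range (n+1),
      (∑ b1 ∈ range (n+1), if 1 ≤ b1 ∧ b1 ≤ a1 ∧ a1 + 1 ≤ n then 1 else 0)
        = if a1 + 1 ≤ n then a1 else 0 := by
    intro a1 ha1
    rw [mem_range] at ha1
    by_cases hc : a1 + 1 ≤ n
    · rw [if_pos hc]
      rw [show (∑ b1 ∈ range (n+1), if 1 ≤ b1 ∧ b1 ≤ a1 ∧ a1 + 1 ≤ n then 1 else 0)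
          = ∑ b1 ∈ range (n+1), if 1 ≤ b1 ∧ b1 ≤ a1 then 1 else 0 from
        Finset.sum_congr rfl fun b1 _ => by split_ifs <;> omega]
      rw [countl]
      omega
    · rw [if_neg hc]
      rw [show (∑ b1 ∈ range (n+1), if 1 ≤ b1 ∧ b1 ≤ a1 ∧ a1 + 1 ≤ n then 1 else 0)
          = ∑ b1 ∈ range (n+1), 0 from
        Finset.sum_congr rfl fun b1 _ => by rw [if_neg (by omega)]]
      simp
  rw [Finset.sum_congr rfl step, sId]
  rw [← Finset.sum_subset (Finset.range_subset_range.mpr (by omega : n ≤ n + 1))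
    (fun x _ hnx => by rw [mem_range] at hnx; rw [if_neg (by omega)])]
  exact Finset.sum_congr rfl fun a ha => by rw [mem_range] at ha; rw [if_pos (by omega)]

lemma card_G3a (n : ℕ) : (G3a n).card = sS2 (n - 1) := by
  rw [G3a, Finset.card_filter, Finset.sum_product]
  have step : ∀ a1 ∈ range (n+1),
      (∑ p ∈ range (n+1) ×ˢ range (n+1),
        if 1 ≤ p.1 ∧ p.1 ≤ a1 ∧ a1 + 2 ≤ n ∧ 1 ≤ p.2 ∧ p.1 + p.2 ≤ a1 + 1 then 1 else 0)
        = if a1 + 2 ≤ n then sTs a1 else 0 := by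
    intro a1 ha1
    rw [mem_range] at ha1
    rw [Finset.sum_product]
    have inner : ∀ b1 ∈ range (n+1),
        (∑ b2 ∈ range (n+1),
          if 1 ≤ b1 ∧ b1 ≤ a1 ∧ a1 + 2 ≤ n ∧ 1 ≤ b2 ∧ b1 + b2 ≤ a1 + 1 then 1 else 0)
        = if 1 ≤ b1 ∧ b1 ≤ a1 ∧ a1 + 2 ≤ n then a1 + 1 - b1 else 0 := by
      intro b1 _
      by_cases hc : 1 ≤ b1 ∧ b1 ≤ a1 ∧ a1 + 2 ≤ n
      · rw [if_pos hc]
        rw [show (∑ b2 ∈ range (n+1),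
            if 1 ≤ b1 ∧ b1 ≤ a1 ∧ a1 + 2 ≤ n ∧ 1 ≤ b2 ∧ b1 + b2 ≤ a1 + 1 then 1 else 0)
            = ∑ b2 ∈ range (n+1), if 1 ≤ b2 ∧ b2 ≤ a1 + 1 - b1 then 1 else 0 from
          Finset.sum_congr rfl fun b2 _ => by split_ifs <;> omega]
        rw [countl]
        omega
      · rw [if_neg hc]
        rw [show (∑ b2 ∈ range (n+1),
            if 1 ≤ b1 ∧ b1 ≤ a1 ∧ a1 + 2 ≤ n ∧ 1 ≤ b2 ∧ b1 + b2 ≤ a1 + 1 then 1 else 0)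
            = ∑ b2 ∈ range (n+1), 0 from
          Finset.sum_congr rfl fun b2 _ => by rw [if_neg (by tauto)]]
        simp
    rw [Finset.sum_congr rfl inner]
    by_cases hc : a1 + 2 ≤ n
    · rw [if_pos hc]
      rw [show (∑ b1 ∈ range (n+1), if 1 ≤ b1 ∧ b1 ≤ a1 ∧ a1 + 2 ≤ n then a1 + 1 - b1 else 0)
          = ∑ b1 ∈ range (n+1), if 1 ≤ b1 ∧ b1 ≤ a1 then a1 + 1 - b1 else 0 from
        Finset.sum_congr rfl fun b1 _ => by split_ifs <;> omega]
      exact countw (n+1) a1 (by omega)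
    · rw [if_neg hc]
      rw [show (∑ b1 ∈ range (n+1), if 1 ≤ b1 ∧ b1 ≤ a1 ∧ a1 + 2 ≤ n then a1 + 1 - b1 else 0)
          = ∑ b1 ∈ range (n+1), 0 from
        Finset.sum_congr rfl fun b1 _ => by rw [if_neg (by tauto)]]
      simp
  rw [Finset.sum_congr rfl step, sS2]
  rw [← Finset.sum_subset (Finset.range_subset_range.mpr (by omega : n - 1 ≤ n + 1))
    (fun x hx hnx => by rw [mem_range] at hx hnx; rw [if_neg (by omega)])]
  exact Finset.sum_congr rfl fun a ha => by rw [mem_range] at ha; rw [if_pos (by omega)]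

lemma card_G3b (n : ℕ) : (G3b n).card = sS3 (n - 2) := by
  rw [G3b, Finset.card_filter, Finset.sum_product]
  have step : ∀ a1 ∈ range (n+1),
      (∑ p ∈ range (n+1) ×ˢ range (n+1),
        if 1 ≤ p.1 ∧ p.1 ≤ a1 ∧ 2 ≤ p.2 ∧ a1 + p.2 + 1 ≤ n then 1 else 0)
        = a1 * (n - 2 - a1) := by
    intro a1 ha1
    rw [mem_range] at ha1
    rw [Finset.sum_product]
    have inner : ∀ b1 ∈ range (n+1),
        (∑ a2 ∈ range (n+1), if 1 ≤ b1 ∧ b1 ≤ a1 ∧ 2 ≤ a2 ∧ a1 + a2 + 1 ≤ n then 1 else 0)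
        = if 1 ≤ b1 ∧ b1 ≤ a1 then n - 2 - a1 else 0 := by
      intro b1 _
      by_cases hc : 1 ≤ b1 ∧ b1 ≤ a1
      · rw [if_pos hc]
        rw [show (∑ a2 ∈ range (n+1), if 1 ≤ b1 ∧ b1 ≤ a1 ∧ 2 ≤ a2 ∧ a1 + a2 + 1 ≤ n then 1 else 0)
            = ∑ a2 ∈ range (n+1), if 2 ≤ a2 ∧ a2 ≤ n - 1 - a1 then 1 else 0 from
          Finset.sum_congr rfl fun a2 _ => by split_ifs <;> omega]
        rw [countl]
        omega
      · rw [if_neg hc]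
        rw [show (∑ a2 ∈ range (n+1), if 1 ≤ b1 ∧ b1 ≤ a1 ∧ 2 ≤ a2 ∧ a1 + a2 + 1 ≤ n then 1 else 0)
            = ∑ a2 ∈ range (n+1), 0 from
          Finset.sum_congr rfl fun a2 _ => by rw [if_neg (by tauto)]]
        simp
    rw [Finset.sum_congr rfl inner]
    rw [show (∑ b1 ∈ range (n+1), if 1 ≤ b1 ∧ b1 ≤ a1 then n - 2 - a1 else 0)
        = ∑ b1 ∈ range (n+1), (n - 2 - a1) * (if 1 ≤ b1 ∧ b1 ≤ a1 then 1 else 0) from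
      Finset.sum_congr rfl fun b1 _ => by split_ifs <;> omega]
    rw [← Finset.mul_sum, countl]
    have : min (a1 + 1) (n + 1) - min 1 (n + 1) = a1 := by omega
    rw [this, Nat.mul_comm]
  rw [Finset.sum_congr rfl step, sS3]
  rw [← Finset.sum_subset (Finset.range_subset_range.mpr (by omega : n - 2 ≤ n + 1))
    (fun x hx hnx => by
      rw [mem_range] at hx hnx
      have : n - 2 - x = 0 := by omega
      rw [this, Nat.mul_zero])]


lemma final_count (n : ℕ) (hn : 1 ≤ n) :
    3 * (1 + sId n + sS2 (n - 1) + sS3 (n - 2)) + 3 * n ^ 2 = n ^ 3 + 5 * n := by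
  match n, hn with
  | 1, _ => decide
  | 2, _ => decide
  | (k+3), _ =>
    have h1 := sId_closed (k+3)
    have h2 := sS2_closed (k+1)
    have h3 := sS3_closed k
    have e1 : k + 3 - 1 = (k+1) + 1 := by omega
    have e2 : k + 3 - 2 = k + 1 := by omega
    rw [e1, e2]
    nlinarith [h1, h2, h3]

def h2w (n : ℕ) (p : ℕ × ℕ) : List Bool :=
  upDown p.1 p.2 ++ (upDown (n - p.1) (n - p.2) ++ upDown 0 0)
def h3aw (n : ℕ) (t : ℕ × ℕ × ℕ) : List Bool :=
  upDown t.1 t.2.1 ++ (upDown 1 t.2.2 ++ upDown (n - t.1 - 1) (n - t.2.1 - t.2.2))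
def h3bw (n : ℕ) (t : ℕ × ℕ × ℕ) : List Bool :=
  upDown t.1 t.2.1 ++ (upDown t.2.2 1 ++ upDown (n - t.1 - t.2.2) (n - t.2.1 - 1))

lemma upDown_zero : upDown 0 0 = [] := rfl

lemma head?_upDown_append (a b : ℕ) (l : List Bool) (ha : 0 < a) :
    (upDown a b ++ l).head? = some true := by
  obtain ⟨a0, rfl⟩ : ∃ a0, a = a0 + 1 := ⟨a - 1, by omega⟩
  rw [upDown, List.replicate_succ]
  simp

lemma mem_G2 (n : ℕ) (p : ℕ × ℕ) :
    p ∈ G2 n ↔ (p.1 < n + 1 ∧ p.2 < n + 1) ∧ 1 ≤ p.2 ∧ p.2 ≤ p.1 ∧ p.1 + 1 ≤ n := by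
  simp [G2, Finset.mem_filter, Finset.mem_product, Finset.mem_range, and_assoc]

lemma mem_G3a (n : ℕ) (t : ℕ × ℕ × ℕ) :
    t ∈ G3a n ↔ (t.1 < n + 1 ∧ t.2.1 < n + 1 ∧ t.2.2 < n + 1) ∧
      1 ≤ t.2.1 ∧ t.2.1 ≤ t.1 ∧ t.1 + 2 ≤ n ∧ 1 ≤ t.2.2 ∧ t.2.1 + t.2.2 ≤ t.1 + 1 := by
  simp [G3a, Finset.mem_filter, Finset.mem_product, Finset.mem_range, and_assoc]

lemma mem_G3b (n : ℕ) (t : ℕ × ℕ × ℕ) :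
    t ∈ G3b n ↔ (t.1 < n + 1 ∧ t.2.1 < n + 1 ∧ t.2.2 < n + 1) ∧
      1 ≤ t.2.1 ∧ t.2.1 ≤ t.1 ∧ 2 ≤ t.2.2 ∧ t.1 + t.2.2 + 1 ≤ n := by
  simp [G3b, Finset.mem_filter, Finset.mem_product, Finset.mem_range, and_assoc]

lemma peaks_updown_nn (n : ℕ) (hn : 1 ≤ n) : numPeaks (upDown n n) = 1 :=
  numPeaks_upDown n n hn hn

lemma peaks_h2w (n : ℕ) (p : ℕ × ℕ) (hp : p ∈ G2 n) : numPeaks (h2w n p) = 2 := by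
  rw [mem_G2] at hp
  rw [h2w, upDown_zero, List.append_nil,
    numPeaks_upDown_append _ _ _ (by omega) (by omega),
    numPeaks_upDown _ _ (by omega) (by omega)]

lemma peaks_h3aw (n : ℕ) (t : ℕ × ℕ × ℕ) (ht : t ∈ G3a n) : numPeaks (h3aw n t) = 3 := by
  rw [mem_G3a] at ht
  rw [h3aw, numPeaks_upDown_append _ _ _ (by omega) (by omega),
    numPeaks_upDown_append _ _ _ (by omega) (by omega),
    numPeaks_upDown _ _ (by omega) (by omega)]

lemma peaks_h3bw (n : ℕ) (t : ℕ × ℕ × ℕ) (ht : t ∈ G3b n) : numPeaks (h3bw n t) = 3 := by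
  rw [mem_G3b] at ht
  rw [h3bw, numPeaks_upDown_append _ _ _ (by omega) (by omega),
    numPeaks_upDown_append _ _ _ (by omega) (by omega),
    numPeaks_upDown _ _ (by omega) (by omega)]

lemma count_three_true (a1 b1 a2 b2 a3 b3 : ℕ) :
    (upDown a1 b1 ++ (upDown a2 b2 ++ upDown a3 b3)).count true = a1 + (a2 + a3) := by
  rw [List.count_append, List.count_append, count_upDown_true, count_upDown_true,
    count_upDown_true]

lemma count_three_false (a1 b1 a2 b2 a3 b3 : ℕ) :
    (upDown a1 b1 ++ (upDown a2 b2 ++ upDown a3 b3)).count false = b1 + (b2 + b3) := by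
  rw [List.count_append, List.count_append, count_upDown_false, count_upDown_false,
    count_upDown_false]

lemma dyck_three (n a1 b1 a2 b2 a3 b3 : ℕ) (hsa : a1 + (a2 + a3) = n)
    (hsb : b1 + (b2 + b3) = n) (h1 : b1 ≤ a1) (h2 : b1 + b2 ≤ a1 + a2) :
    IsDyckWord n (upDown a1 b1 ++ (upDown a2 b2 ++ upDown a3 b3)) := by
  refine ⟨by rw [count_three_true]; exact hsa, by rw [count_three_false]; exact hsb, ?_⟩
  intro k
  rw [count_take_three_true, count_take_three_false]
  omega

lemma dyck_updown_nn (n : ℕ) : IsDyckWord n (upDown n n) := by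
  have h := dyck_three n n n 0 0 0 0 (by omega) (by omega) (by omega) (by omega)
  rw [upDown_zero] at h
  simpa using h

lemma dyck_h2w (n : ℕ) (p : ℕ × ℕ) (hp : p ∈ G2 n) : IsDyckWord n (h2w n p) := by
  rw [mem_G2] at hp
  exact dyck_three n p.1 p.2 (n - p.1) (n - p.2) 0 0 (by omega) (by omega) (by omega) (by omega)

lemma dyck_h3aw (n : ℕ) (t : ℕ × ℕ × ℕ) (ht : t ∈ G3a n) : IsDyckWord n (h3aw n t) := by
  rw [mem_G3a] at ht
  exact dyck_three n t.1 t.2.1 1 t.2.2 (n - t.1 - 1) (n - t.2.1 - t.2.2)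
    (by omega) (by omega) (by omega) (by omega)

lemma dyck_h3bw (n : ℕ) (t : ℕ × ℕ × ℕ) (ht : t ∈ G3b n) : IsDyckWord n (h3bw n t) := by
  rw [mem_G3b] at ht
  exact dyck_three n t.1 t.2.1 t.2.2 1 (n - t.1 - t.2.2) (n - t.2.1 - 1)
    (by omega) (by omega) (by omega) (by omega)

lemma tpm_h3aw (n : ℕ) (t : ℕ × ℕ × ℕ) (ht : t ∈ G3a n) : ThreePeakMiddleOne (h3aw n t) := by
  have hm := ht
  rw [mem_G3a] at hm
  refine ⟨peaks_h3aw n t ht, t.1, t.2.1, 1, t.2.2, n - t.1 - 1, n - t.2.1 - t.2.2,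
    by omega, by omega, by omega, by omega, by omega, by omega, ?_, Or.inl rfl⟩
  rw [h3aw, List.append_assoc]

lemma tpm_h3bw (n : ℕ) (t : ℕ × ℕ × ℕ) (ht : t ∈ G3b n) : ThreePeakMiddleOne (h3bw n t) := by
  have hm := ht
  rw [mem_G3b] at hm
  refine ⟨peaks_h3bw n t ht, t.1, t.2.1, t.2.2, 1, n - t.1 - t.2.2, n - t.2.1 - 1,
    by omega, by omega, by omega, by omega, by omega, by omega, ?_, Or.inr rfl⟩
  rw [h3bw, List.append_assoc]

def bigSet (n : ℕ) : Finset (List Bool) :=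
  (({upDown n n} : Finset (List Bool)) ∪ (G2 n).image (h2w n)) ∪
    ((G3a n).image (h3aw n) ∪ (G3b n).image (h3bw n))

-- injectivity
lemma injOn_h2w (n : ℕ) : Set.InjOn (h2w n) (G2 n) := by
  intro p hp q hq heq
  rw [Finset.mem_coe, mem_G2] at hp hq
  rw [h2w, h2w, upDown_zero, List.append_nil, List.append_nil] at heq
  obtain ⟨h1, h2, -⟩ := cancel_block p.1 p.2 q.1 q.2 _ _ (by omega) (by omega)
    (by omega) (by omega)
    (by rw [head?_upDown _ _ (by omega)]; simp)
    (by rw [head?_upDown _ _ (by omega)]; simp) heq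
  exact Prod.ext h1 h2

lemma injOn_h3aw (n : ℕ) : Set.InjOn (h3aw n) (G3a n) := by
  intro p hp q hq heq
  rw [Finset.mem_coe, mem_G3a] at hp hq
  rw [h3aw, h3aw] at heq
  obtain ⟨h1, h2, heq2⟩ := cancel_block p.1 p.2.1 q.1 q.2.1 _ _ (by omega) (by omega)
    (by omega) (by omega)
    (by rw [head?_upDown_append _ _ _ (by omega)]; simp)
    (by rw [head?_upDown_append _ _ _ (by omega)]; simp) heq
  obtain ⟨-, h3, -⟩ := cancel_block 1 p.2.2 1 q.2.2 _ _ (by omega) (by omega)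
    (by omega) (by omega)
    (by rw [head?_upDown _ _ (by omega)]; simp)
    (by rw [head?_upDown _ _ (by omega)]; simp) heq2
  exact Prod.ext h1 (Prod.ext h2 h3)

lemma injOn_h3bw (n : ℕ) : Set.InjOn (h3bw n) (G3b n) := by
  intro p hp q hq heq
  rw [Finset.mem_coe, mem_G3b] at hp hq
  rw [h3bw, h3bw] at heq
  obtain ⟨h1, h2, heq2⟩ := cancel_block p.1 p.2.1 q.1 q.2.1 _ _ (by omega) (by omega)
    (by omega) (by omega)
    (by rw [head?_upDown_append _ _ _ (by omega)]; simp)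
    (by rw [head?_upDown_append _ _ _ (by omega)]; simp) heq
  obtain ⟨h3, -, -⟩ := cancel_block p.2.2 1 q.2.2 1 _ _ (by omega) (by omega)
    (by omega) (by omega)
    (by rw [head?_upDown _ _ (by omega)]; simp)
    (by rw [head?_upDown _ _ (by omega)]; simp) heq2
  exact Prod.ext h1 (Prod.ext h2 h3)

lemma disj_ab (n : ℕ) : Disjoint ((G3a n).image (h3aw n)) ((G3b n).image (h3bw n)) := by
  rw [Finset.disjoint_left]
  rintro w hwa hwb
  rw [Finset.mem_image] at hwa hwb
  obtain ⟨p, hp, rfl⟩ := hwa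
  obtain ⟨q, hq, heq⟩ := hwb
  rw [mem_G3a] at hp
  rw [mem_G3b] at hq
  rw [h3aw, h3bw] at heq
  obtain ⟨-, -, heq2⟩ := cancel_block q.1 q.2.1 p.1 p.2.1 _ _ (by omega) (by omega)
    (by omega) (by omega)
    (by rw [head?_upDown_append _ _ _ (by omega)]; simp)
    (by rw [head?_upDown_append _ _ _ (by omega)]; simp) heq
  obtain ⟨h3, -, -⟩ := cancel_block q.2.2 1 1 p.2.2 _ _ (by omega) (by omega)
    (by omega) (by omega)
    (by rw [head?_upDown _ _ (by omega)]; simp)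
    (by rw [head?_upDown _ _ (by omega)]; simp) heq2
  omega

lemma card_bigSet (n : ℕ) (hn : 1 ≤ n) :
    (bigSet n).card = 1 + sId n + sS2 (n - 1) + sS3 (n - 2) := by
  have d1 : Disjoint ({upDown n n} : Finset (List Bool)) ((G2 n).image (h2w n)) := by
    rw [Finset.disjoint_left]
    rintro w hw1 hw2
    rw [Finset.mem_singleton] at hw1
    rw [Finset.mem_image] at hw2
    obtain ⟨p, hp, heq⟩ := hw2
    have h2 := peaks_h2w n p hp
    rw [heq, hw1, peaks_updown_nn n hn] at h2
    omega
  have d2 : Disjoint (({upDown n n} : Finset (List Bool)) ∪ (G2 n).image (h2w n))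
      ((G3a n).image (h3aw n) ∪ (G3b n).image (h3bw n)) := by
    rw [Finset.disjoint_left]
    rintro w hw1 hw2
    have hpk : numPeaks w ≤ 2 := by
      rw [Finset.mem_union] at hw1
      rcases hw1 with h | h
      · rw [Finset.mem_singleton] at h; rw [h, peaks_updown_nn n hn]; omega
      · rw [Finset.mem_image] at h
        obtain ⟨p, hp, rfl⟩ := h
        rw [peaks_h2w n p hp]
    have hpk3 : numPeaks w = 3 := by
      rw [Finset.mem_union] at hw2
      rcases hw2 with h | h
      · rw [Finset.mem_image] at h
        obtain ⟨p, hp, rfl⟩ := h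
        exact peaks_h3aw n p hp
      · rw [Finset.mem_image] at h
        obtain ⟨p, hp, rfl⟩ := h
        exact peaks_h3bw n p hp
    omega
  rw [bigSet, Finset.card_union_of_disjoint d2, Finset.card_union_of_disjoint d1,
    Finset.card_union_of_disjoint (disj_ab n), Finset.card_singleton,
    Finset.card_image_of_injOn (injOn_h2w n), Finset.card_image_of_injOn (injOn_h3aw n),
    Finset.card_image_of_injOn (injOn_h3bw n), card_G2, card_G3a, card_G3b]
  omega

lemma set_eq (n : ℕ) (hn : 1 ≤ n) :
    {w : List Bool | IsDyckWord n w ∧ (numPeaks w ≤ 2 ∨ ThreePeakMiddleOne w)}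
      = ↑(bigSet n) := by
  ext w
  simp only [Set.mem_setOf_eq, Finset.coe_union, Set.mem_union, Finset.mem_coe,
    bigSet, Finset.mem_union, Finset.mem_singleton, Finset.mem_image]
  constructor
  · rintro ⟨hd, hle | h3⟩
    · rcases (show numPeaks w = 0 ∨ numPeaks w = 1 ∨ numPeaks w = 2 by omega) with h | h | h
      · exfalso
        obtain ⟨a1, b1, r, -, -, -, -, hnum⟩ := dyck_decomp n w hn hd
        omega
      · exact Or.inl (Or.inl (dyck_peaks1 n w hn hd h))
      · obtain ⟨a1, b1, a2, b2, ha1, hb1, ha2, hb2, hsa, hsb, hw_eq⟩ :=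
          dyck_peaks2 n w hn hd h
        have hk := hd.2.2 (a1 + b1)
        rw [hw_eq, count_take_three_true, count_take_three_false] at hk
        have hba : b1 ≤ a1 := by omega
        refine Or.inl (Or.inr ⟨(a1, b1), ?_, ?_⟩)
        · rw [mem_G2]
          refine ⟨⟨by omega, by omega⟩, by omega, by omega, by omega⟩
        · rw [h2w]
          have e1 : n - a1 = a2 := by omega
          have e2 : n - b1 = b2 := by omega
          rw [e1, e2, ← hw_eq]
    · obtain ⟨hp3, a1, b1, a2, b2, a3, b3, ha1, hb1, ha2, hb2, ha3, hb3, hw_eq, hor⟩ := h3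
      rw [List.append_assoc] at hw_eq
      have hsa : a1 + (a2 + a3) = n := by
        have h1 := hd.1
        rw [hw_eq, count_three_true] at h1
        exact h1
      have hsb : b1 + (b2 + b3) = n := by
        have h1 := hd.2.1
        rw [hw_eq, count_three_false] at h1
        exact h1
      have hk1 := hd.2.2 (a1 + b1)
      have hk2 := hd.2.2 (a1 + b1 + a2 + b2)
      rw [hw_eq, count_take_three_true, count_take_three_false] at hk1 hk2
      have hba : b1 ≤ a1 := by omega
      have hbb : b1 + b2 ≤ a1 + a2 := by omega
      clear hk1 hk2
      by_cases ha2' : a2 = 1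
      · refine Or.inr (Or.inl ⟨(a1, b1, b2), ?_, ?_⟩)
        · rw [mem_G3a]
          show (a1 < n + 1 ∧ b1 < n + 1 ∧ b2 < n + 1) ∧
            1 ≤ b1 ∧ b1 ≤ a1 ∧ a1 + 2 ≤ n ∧ 1 ≤ b2 ∧ b1 + b2 ≤ a1 + 1
          exact ⟨⟨by omega, by omega, by omega⟩, by omega, by omega, by omega, by omega,
            by omega⟩
        · rw [h3aw]
          have e1 : n - a1 - 1 = a3 := by omega
          have e2 : n - b1 - b2 = b3 := by omega
          simp only [e1, e2]
          rw [← ha2', ← hw_eq]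
      · have hb2' : b2 = 1 := by tauto
        refine Or.inr (Or.inr ⟨(a1, b1, a2), ?_, ?_⟩)
        · rw [mem_G3b]
          show (a1 < n + 1 ∧ b1 < n + 1 ∧ a2 < n + 1) ∧
            1 ≤ b1 ∧ b1 ≤ a1 ∧ 2 ≤ a2 ∧ a1 + a2 + 1 ≤ n
          exact ⟨⟨by omega, by omega, by omega⟩, by omega, by omega, by omega, by omega⟩
        · rw [h3bw]
          have e1 : n - a1 - a2 = a3 := by omega
          have e2 : n - b1 - 1 = b3 := by omega
          simp only [e1, e2]
          rw [← hb2', ← hw_eq]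
  · rintro ((rfl | ⟨p, hp, rfl⟩) | (⟨p, hp, rfl⟩ | ⟨p, hp, rfl⟩))
    · exact ⟨dyck_updown_nn n, Or.inl (by rw [peaks_updown_nn n hn]; omega)⟩
    · exact ⟨dyck_h2w n p hp, Or.inl (by rw [peaks_h2w n p hp])⟩
    · exact ⟨dyck_h3aw n p hp, Or.inr (tpm_h3aw n p hp)⟩
    · exact ⟨dyck_h3bw n p hp, Or.inr (tpm_h3bw n p hp)⟩

/-- For every `n ≥ 1`, three times the number of Dyck words of semilength `n`
that either have at most two peaks, or have exactly three peaks with `a₂ = 1` or `b₂ = 1` in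
their unique decomposition, equals `n³ - 3n² + 5n` (i.e. the count is `(n³ - 3n² + 5n)/3`). -/
theorem shod_dyck_count (n : ℕ) (hn : 1 ≤ n) :
    (3 : ℤ) * Nat.card {w : List Bool //
        IsDyckWord n w ∧ (numPeaks w ≤ 2 ∨ ThreePeakMiddleOne w)} =
      (n : ℤ) ^ 3 - 3 * (n : ℤ) ^ 2 + 5 * (n : ℤ) := by
  have hcard : Nat.card {w : List Bool //
      IsDyckWord n w ∧ (numPeaks w ≤ 2 ∨ ThreePeakMiddleOne w)} = (bigSet n).card := by
    rw [show {w : List Bool // IsDyckWord n w ∧ (numPeaks w ≤ 2 ∨ ThreePeakMiddleOne w)}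
      = ↥{w : List Bool | IsDyckWord n w ∧ (numPeaks w ≤ 2 ∨ ThreePeakMiddleOne w)} from rfl,
      Nat.card_coe_set_eq, set_eq n hn, Set.ncard_coe_finset]
  rw [hcard, card_bigSet n hn]
  have hfin := final_count n hn
  have hz : (3 : ℤ) * (1 + sId n + sS2 (n - 1) + sS3 (n - 2)) + 3 * (n : ℤ) ^ 2
      = (n : ℤ) ^ 3 + 5 * n := by exact_mod_cast hfin
  push_cast
  linarith
end
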